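/- Let 𝒮 be a triangulated category admitting a bounded t-structure, and let G be an object of 𝒮 with fd(𝒮, G) < ∞. Then G is a classical generator of 𝒮, i.e. 𝒮 = ⟨G⟩. -/

import Mathlib

open CategoryTheory Limits Pretriangulated

universe v u

namespace Paper

variable (C : Type u) [Category.{v} C] [HasZeroObject C] [HasShift C ℤ]
  [Preadditive C] [∀ n : ℤ, (shiftFunctor C n).Additive] [Pretriangulated C]

/-- `Z` is a direct sum of `X` and `Y`. -/
def IsDirSum {C : Type u} [Category.{v} C] [Preadditive C] (Z X Y : C) : Prop :=
  ∃ (i₁ : X ⟶ Z) (i₂ : Y ⟶ Z) (p₁ : Z ⟶ X) (p₂ : Z ⟶ Y),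
    i₁ ≫ p₁ = 𝟙 X ∧ i₂ ≫ p₂ = 𝟙 Y ∧ i₁ ≫ p₂ = 0 ∧ i₂ ≫ p₁ = 0 ∧
    p₁ ≫ i₁ + p₂ ≫ i₂ = 𝟙 Z

/-- The extension `A * B` of two classes of objects. -/
def star (A B : Set C) : Set C :=
  {Z | ∃ (X Y : C) (f : X ⟶ Z) (g : Z ⟶ Y) (h : Y ⟶ (X⟦(1:ℤ)⟧ : C)),
      X ∈ A ∧ Y ∈ B ∧ Triangle.mk f g h ∈ distTriang C}

/-- Closure of a class of objects under finite direct sums and isomorphism. -/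
inductive addClos (A : Set C) : C → Prop
  | of {X Y : C} (e : X ≅ Y) (hY : Y ∈ A) : addClos A X
  | zero {X : C} (hX : IsZero X) : addClos A X
  | dirSum {Z X Y : C} (hX : addClos A X) (hY : addClos A Y) (h : IsDirSum Z X Y) :
      addClos A Z

/-- `coprodN A n` is `coprod_n (A)`; by convention `coprodN A 0` consists of zero objects. -/
def coprodN (A : Set C) : ℕ → Set C
  | 0 => {X | IsZero X}
  | 1 => setOf (addClos C A)
  | (n+2) => star C (setOf (addClos C A)) (coprodN A (n+1))

/-- Direct summands of objects in `A`. -/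
def smd (A : Set C) : Set C := {X | ∃ (Z Y : C), Z ∈ A ∧ IsDirSum Z X Y}

/-- The class `G[I] = {G[-i] : i ∈ I}` (up to isomorphism). -/
def shiftsOf (G : C) (I : Set ℤ) : Set C :=
  {X | ∃ i ∈ I, Nonempty (X ≅ (G⟦(-i : ℤ)⟧ : C))}

/-- `⟨G⟩ₙ^I := smd (coprodₙ (G[I]))`. -/
def genN (G : C) (I : Set ℤ) (n : ℕ) : Set C := smd C (coprodN C (shiftsOf C G I) n)

/-- `⟨G⟩^I := ⋃_{n > 0} ⟨G⟩ₙ^I`. -/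
def gen (G : C) (I : Set ℤ) : Set C := {X | ∃ n : ℕ, X ∈ genN C G I (n+1)}

/-- The right orthogonal `G[I]^⊥`. -/
def rPerpShifts (G : C) (I : Set ℤ) : Set C :=
  {Y | ∀ i ∈ I, ∀ f : (G⟦(-i : ℤ)⟧ : C) ⟶ Y, f = 0}

/-- `fd(𝒮, G) ≤ m` : `G(-∞,-1]^⊥ ⊆ ⟨G⟩^{[0,∞)}[m] = ⟨G⟩^{[-m,∞)}`. -/
def fdLE (G : C) (m : ℤ) : Prop :=
  ∀ X ∈ rPerpShifts C G (Set.Iic (-1)), X ∈ gen C G (Set.Ici (-m))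

/-- `fd(𝒮ᵒᵖ, Gᵒᵖ) ≤ m`, expressed inside `𝒮`. -/
def fdOpLE (G : C) (m : ℤ) : Prop :=
  ∀ X : C, (∀ j : ℤ, j ≤ -1 → ∀ f : X ⟶ (G⟦j⟧ : C), f = 0) →
    X ∈ gen C G (Set.Iic m)

/-- A t-structure on `C`, given by its aisle `le = 𝒮^{≤0}` and coaisle `ge = 𝒮^{≥0}`. -/
structure TStructure where
  le : Set C
  ge : Set C
  le_iso : ∀ ⦃X Y : C⦄, (X ≅ Y) → X ∈ le → Y ∈ le
  ge_iso : ∀ ⦃X Y : C⦄, (X ≅ Y) → X ∈ ge → Y ∈ ge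
  le_shift : ∀ X ∈ le, (X⟦(1:ℤ)⟧ : C) ∈ le
  ge_shift : ∀ X ∈ ge, (X⟦(-1:ℤ)⟧ : C) ∈ ge
  hom_zero : ∀ X ∈ le, ∀ Y ∈ ge, ∀ f : (X⟦(1:ℤ)⟧ : C) ⟶ Y, f = 0
  triangle : ∀ X : C, ∃ (A B : C) (_ : A ∈ le) (_ : B ∈ ge)
      (f : ((A⟦(1:ℤ)⟧ : C)) ⟶ X) (g : X ⟶ B) (h : B ⟶ ((A⟦(1:ℤ)⟧ : C)⟦(1:ℤ)⟧)),
      Triangle.mk f g h ∈ distTriang C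

variable {C}

/-- bounded above: `𝒮 = ⋃ₙ 𝒮^{≤n}`. -/
def TStructure.BoundedAbove (T : TStructure C) : Prop :=
  ∀ X : C, ∃ n : ℕ, (X⟦(n : ℤ)⟧ : C) ∈ T.le

/-- bounded below: `𝒮 = ⋃ₙ 𝒮^{≥-n}`. -/
def TStructure.BoundedBelow (T : TStructure C) : Prop :=
  ∀ X : C, ∃ n : ℕ, (X⟦(-(n : ℤ))⟧ : C) ∈ T.ge

/-- bounded t-structure. -/
def TStructure.Bounded (T : TStructure C) : Prop :=
  T.BoundedAbove ∧ T.BoundedBelow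

/-- A good metric on `C`. -/
structure IsGoodMetric (M : ℕ → Set C) : Prop where
  zero_mem : ∀ n : ℕ, ∀ X : C, IsZero X → X ∈ M n
  ext : ∀ n : ℕ, star C (M n) (M n) ⊆ M n
  shift_neg : ∀ n : ℕ, ∀ X ∈ M (n+1), (X⟦(-1:ℤ)⟧ : C) ∈ M n
  mono : ∀ n : ℕ, ∀ X ∈ M (n+1), X ∈ M n
  shift_pos : ∀ n : ℕ, ∀ X ∈ M (n+1), (X⟦(1:ℤ)⟧ : C) ∈ M n

variable (C)

/-- A chain of morphisms indexed by `ℕ`. -/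
structure Chain where
  X : ℕ → C
  f : ∀ n : ℕ, X n ⟶ X (n+1)

/-- `Z` is a cone of `f : A ⟶ B`. -/
def IsConeOf {A B : C} (Z : C) (f : A ⟶ B) : Prop :=
  ∃ (g : B ⟶ Z) (h : Z ⟶ (A⟦(1:ℤ)⟧ : C)), Triangle.mk f g h ∈ distTriang C

variable {C}

/-- Cauchy sequence with respect to a (good) metric `M`. -/
def Chain.IsCauchy (c : Chain C) (M : ℕ → Set C) : Prop :=
  ∀ i : ℕ, ∃ N : ℕ, ∀ j : ℕ, N ≤ j → ∃ Z : C, IsConeOf C Z (c.f j) ∧ Z ∈ M i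

end Paper

/-!
Take `n` with `X[-n] ∈ 𝒮^{≥0}` and `k` with `G[k] ∈ 𝒮^{≤0}`. For `j ≥ 1`,
`Hom(G[j], X[-n-k]) ≅ Hom(G[k][j], X[-n]) = 0` by the orthogonality of the t-structure, so
`X[-n-k] ∈ G(-∞,-1]^⊥ ⊆ ⟨G⟩^{[-m,∞)} ⊆ ⟨G⟩`, and `⟨G⟩` is closed under shifts.
-/

namespace Paper

section Preadditive

variable {C : Type*} [Category C] [Preadditive C]

theorem IsDirSum.map {D : Type*} [Category D] [Preadditive D] (F : C ⥤ D) [F.Additive]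
    {Z X Y : C} (h : IsDirSum Z X Y) : IsDirSum (F.obj Z) (F.obj X) (F.obj Y) := by
  obtain ⟨i₁, i₂, p₁, p₂, h₁, h₂, h₃, h₄, h₅⟩ := h
  refine ⟨F.map i₁, F.map i₂, F.map p₁, F.map p₂, ?_, ?_, ?_, ?_, ?_⟩ <;>
    simp only [← F.map_comp, ← F.map_add, h₁, h₂, h₃, h₄, h₅, F.map_id, F.map_zero]

theorem IsDirSum.of_iso_fst {Z X X' Y : C} (e : X ≅ X') (h : IsDirSum Z X' Y) :
    IsDirSum Z X Y := by
  obtain ⟨i₁, i₂, p₁, p₂, h₁, h₂, h₃, h₄, h₅⟩ := h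
  refine ⟨e.hom ≫ i₁, i₂, p₁ ≫ e.inv, p₂, ?_, h₂, ?_, ?_, ?_⟩ <;>
    simp [reassoc_of% h₁, h₃, reassoc_of% h₄, h₅]

theorem addClos_mono {A B : Set C} (hAB : A ⊆ B) {X : C} (h : addClos C A X) :
    addClos C B X := by
  induction h with
  | of e hY => exact .of e (hAB hY)
  | zero hX => exact .zero hX
  | dirSum _ _ h ihX ihY => exact .dirSum ihX ihY h

theorem addClos_map (F : C ⥤ C) [F.Additive] {A : Set C} (hA : ∀ X ∈ A, F.obj X ∈ A)
    {X : C} (h : addClos C A X) : addClos C A (F.obj X) := by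
  induction h with
  | of e hY => exact .of (F.mapIso e) (hA _ hY)
  | zero hX => exact .zero (F.map_isZero hX)
  | dirSum _ _ h ihX ihY => exact .dirSum ihX ihY (h.map F)

end Preadditive

section Shift

variable {C : Type*} [Category C] [HasShift C ℤ]

theorem shiftsOf_mono (G : C) {I J : Set ℤ} (hIJ : I ⊆ J) :
    shiftsOf C G I ⊆ shiftsOf C G J :=
  fun _ ⟨i, hi, e⟩ => ⟨i, hIJ hi, e⟩

theorem shift_mem_shiftsOf_univ (G : C) (k : ℤ) {X : C} (hX : X ∈ shiftsOf C G Set.univ) :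
    X⟦k⟧ ∈ shiftsOf C G Set.univ := by
  obtain ⟨i, -, ⟨e⟩⟩ := hX
  exact ⟨i - k, trivial, ⟨(shiftFunctor C k).mapIso e ≪≫
    ((shiftFunctorAdd' C (-i) k (-(i - k)) (by ring)).app G).symm⟩⟩

end Shift

section Pretriangulated

variable {C : Type*} [Category C] [HasZeroObject C] [HasShift C ℤ] [Preadditive C]
  [∀ n : ℤ, (shiftFunctor C n).Additive] [Pretriangulated C]

theorem star_mono {A A' B B' : Set C} (hA : A ⊆ A') (hB : B ⊆ B') :
    star C A B ⊆ star C A' B' := by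
  rintro Z ⟨X, Y, f, g, h, hX, hY, hT⟩
  exact ⟨X, Y, f, g, h, hA hX, hB hY, hT⟩

theorem coprodN_mono {A B : Set C} (hAB : A ⊆ B) : ∀ n, coprodN C A n ⊆ coprodN C B n
  | 0 => fun _ hX => hX
  | 1 => fun _ => addClos_mono hAB
  | n + 2 => star_mono (fun _ => addClos_mono hAB) (coprodN_mono hAB (n + 1))

theorem shift_mem_star (k : ℤ) {A B : Set C} (hA : ∀ X ∈ A, X⟦k⟧ ∈ A)
    (hB : ∀ Y ∈ B, Y⟦k⟧ ∈ B) {Z : C} (hZ : Z ∈ star C A B) : Z⟦k⟧ ∈ star C A B := by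
  obtain ⟨X, Y, f, g, h, hX, hY, hT⟩ := hZ
  let T' := (Triangle.shiftFunctor C k).obj (Triangle.mk f g h)
  exact ⟨_, _, T'.mor₁, T'.mor₂, T'.mor₃, hA X hX, hB Y hY,
    Triangle.shift_distinguished _ hT k⟩

theorem shift_mem_coprodN (k : ℤ) {A : Set C} (hA : ∀ X ∈ A, X⟦k⟧ ∈ A) :
    ∀ n, ∀ X ∈ coprodN C A n, X⟦k⟧ ∈ coprodN C A n
  | 0 => fun _ hX => (shiftFunctor C k).map_isZero hX
  | 1 => fun _ => addClos_map (shiftFunctor C k) hA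
  | n + 2 => fun _ => shift_mem_star (A := {X | addClos C A X}) k (fun _ => addClos_map _ hA)
      (shift_mem_coprodN k hA (n + 1))

theorem gen_mono (G : C) {I J : Set ℤ} (hIJ : I ⊆ J) : gen C G I ⊆ gen C G J := by
  rintro X ⟨n, Z, Y, hZ, hX⟩
  exact ⟨n, Z, Y, coprodN_mono (shiftsOf_mono G hIJ) _ hZ, hX⟩

theorem mem_gen_of_iso {G : C} {I : Set ℤ} {X Y : C} (e : X ≅ Y) (hY : Y ∈ gen C G I) :
    X ∈ gen C G I := by
  obtain ⟨n, Z, W, hZ, hY⟩ := hY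
  exact ⟨n, Z, W, hZ, hY.of_iso_fst e⟩

theorem shift_mem_gen_univ (G : C) (k : ℤ) {X : C} (hX : X ∈ gen C G Set.univ) :
    X⟦k⟧ ∈ gen C G Set.univ := by
  obtain ⟨n, Z, W, hZ, hX⟩ := hX
  exact ⟨n, Z⟦k⟧, W⟦k⟧, shift_mem_coprodN k (fun _ => shift_mem_shiftsOf_univ G k) _ _ hZ,
    hX.map (shiftFunctor C k)⟩

theorem mem_gen_univ_of_shift_mem (G : C) (k : ℤ) {X : C} (hX : X⟦k⟧ ∈ gen C G Set.univ) :
    X ∈ gen C G Set.univ :=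
  mem_gen_of_iso ((shiftFunctorCompIsoId C k (-k) (add_neg_cancel k)).app X).symm
    (shift_mem_gen_univ G (-k) hX)

namespace TStructure

variable (T : TStructure C)

theorem shift_natCast_mem_le {X : C} (hX : X ∈ T.le) : ∀ t : ℕ, X⟦(t : ℤ)⟧ ∈ T.le
  | 0 => T.le_iso ((shiftFunctorZero' C ((0 : ℕ) : ℤ) Nat.cast_zero).app X).symm hX
  | t + 1 =>
    T.le_iso ((shiftFunctorAdd' C (t : ℤ) 1 ((t + 1 : ℕ) : ℤ) (by push_cast; rfl)).app X).symm
      (T.le_shift _ (shift_natCast_mem_le hX t))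

theorem hom_shift_eq_zero {X Y : C} (hX : X ∈ T.le) (hY : Y ∈ T.ge) {i : ℤ} (hi : 1 ≤ i)
    (f : X⟦i⟧ ⟶ Y) : f = 0 := by
  obtain ⟨t, rfl⟩ : ∃ t : ℕ, i = t + 1 := ⟨(i - 1).toNat, by omega⟩
  have h := T.hom_zero _ (T.shift_natCast_mem_le hX t) Y hY
    (((shiftFunctorAdd' C (t : ℤ) 1 (t + 1) rfl).app X).inv ≫ f)
  rwa [Preadditive.IsIso.comp_left_eq_zero] at h

theorem shift_mem_rPerpShifts {G Y : C} {k : ℤ} (hG : G⟦k⟧ ∈ T.le) (hY : Y ∈ T.ge) :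
    Y⟦-k⟧ ∈ rPerpShifts C G (Set.Iic (-1)) := by
  intro i hi f
  have h := T.hom_shift_eq_zero hG hY (i := -i) (by simp only [Set.mem_Iic] at hi; omega)
    ((shiftFunctorComm C k (-i)).hom.app G ≫ f⟦k⟧' ≫
      (shiftFunctorCompIsoId C (-k) k (neg_add_cancel k)).hom.app Y)
  rwa [Preadditive.IsIso.comp_left_eq_zero, Preadditive.IsIso.comp_right_eq_zero,
    Functor.map_eq_zero_iff] at h

end TStructure

end Pretriangulated

/-- If `𝒮` admits a bounded t-structure and `fd(𝒮, G) < ∞`, then `G` is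
a classical generator of `𝒮`, i.e. `𝒮 = ⟨G⟩`. -/
theorem classical_generator_of_fd_finite
    (C : Type u) [Category.{v} C] [HasZeroObject C] [HasShift C ℤ]
    [Preadditive C] [∀ n : ℤ, (shiftFunctor C n).Additive] [Pretriangulated C]
    (T : TStructure C) (hT : T.Bounded) (G : C) (hG : ∃ m : ℕ, fdLE C G (m : ℤ)) :
    ∀ X : C, X ∈ gen C G Set.univ := by
  intro X
  obtain ⟨m, hm⟩ := hG
  obtain ⟨k, hGk⟩ := hT.1 G
  obtain ⟨n, hXn⟩ := hT.2 X
  have hgen := gen_mono G (Set.subset_univ _) (hm _ (T.shift_mem_rPerpShifts hGk hXn))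
  exact mem_gen_univ_of_shift_mem G _ (mem_gen_univ_of_shift_mem G _ hgen)

end Paper
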